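/- Let R = {R_i, t_i}_{i≥0} be a purely inseparable tower arising from a pair (R, I_0) satisfying conditions (d), (e), and (f) with distinguished principal ideal I_1 ⊆ R_1. Then condition (g) holds if and only if the following condition (g') holds: for every i ≥ 0, I_0·(R_i)_{I_0-tor} = 0 and there exists an isomorphism of graded rings Φ_i• : gr_{I_1}(R_{i+1}) → gr_{I_0}(R_i) such that Φ_i^0 composed with the canonical projection R_{i+1}/I_0R_{i+1} → R_{i+1}/I_1R_{i+1} equals the i-th Frobenius projection F_i. -/
import Mathlib


open Submodule

section Preamble

variable {A : Type*} [CommRing A]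

/-- The submodule of `I`-torsion elements: elements killed by a power of each element of `I`. -/
def Itor (I : Ideal A) (M : Type*) [AddCommGroup M] [Module A M] : Submodule A M where
  carrier := {x | ∀ a ∈ I, ∃ n : ℕ, a ^ n • x = 0}
  zero_mem' := fun a _ => ⟨1, smul_zero _⟩
  add_mem' := by
    rintro x y hx hy a ha
    obtain ⟨n, hn⟩ := hx a ha
    obtain ⟨m, hm⟩ := hy a ha
    refine ⟨n + m, ?_⟩
    have h1 : a ^ (n + m) • x = 0 := by
      rw [pow_add, mul_comm, mul_smul, hn, smul_zero]
    have h2 : a ^ (n + m) • y = 0 := by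
      rw [pow_add, mul_smul, hm, smul_zero]
    rw [smul_add, h1, h2, add_zero]
  smul_mem' := by
    rintro c x hx a ha
    obtain ⟨n, hn⟩ := hx a ha
    exact ⟨n, by rw [smul_comm, hn, smul_zero]⟩

lemma mem_pow_zero (I : Ideal A) (x : A) : x ∈ I ^ 0 := by
  simp [Ideal.one_eq_top]

lemma mul_mem_pow_add {I : Ideal A} {m n : ℕ} {x y : A}
    (hx : x ∈ I ^ m) (hy : y ∈ I ^ n) : x * y ∈ I ^ (m + n) := by
  rw [pow_add]; exact Ideal.mul_mem_mul hx hy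

/-- The `n`-th graded piece `Iⁿ/Iⁿ⁺¹` of the conormal cone of `(A, I)`. -/
abbrev GrPiece (I : Ideal A) (n : ℕ) :=
  (I ^ n : Ideal A) ⧸ (Submodule.comap (I ^ n : Ideal A).subtype (I ^ (n + 1) : Ideal A))

/-- Class of an element of `Iⁿ` in the graded piece `Iⁿ/Iⁿ⁺¹`. -/
def grMk (I : Ideal A) (n : ℕ) (x : A) (hx : x ∈ I ^ n) : GrPiece I n :=
  Submodule.Quotient.mk ⟨x, hx⟩

lemma grMk_eq_iff (I : Ideal A) (n : ℕ) {x y : A} (hx : x ∈ I ^ n) (hy : y ∈ I ^ n) :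
    grMk I n x hx = grMk I n y hy ↔ x - y ∈ I ^ (n + 1) := by
  rw [grMk, grMk, Submodule.Quotient.eq]
  rfl

/-- The map on graded pieces induced by a ring homomorphism `f` with `f(Iⁿ) ⊆ Jⁿ`. -/
def grMap {B : Type*} [CommRing B] (f : A →+* B) (I : Ideal A) (J : Ideal B)
    (hf : ∀ n, ∀ x ∈ I ^ n, f x ∈ J ^ n) (n : ℕ) :
    GrPiece I n → GrPiece J n := by
  refine Quotient.lift (fun x => grMk J n (f x.1) (hf n x.1 x.2)) ?_
  intro x y hxy
  rw [grMk_eq_iff]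
  have hxy0 : x - y ∈ Submodule.comap (I ^ n : Ideal A).subtype (I ^ (n + 1) : Ideal A) :=
    Submodule.quotientRel_def _ |>.mp hxy
  have hxy' : (x : A) - (y : A) ∈ I ^ (n + 1) := hxy0
  have := hf (n + 1) _ hxy'
  rwa [map_sub] at this

@[simp] lemma grMap_mk {B : Type*} [CommRing B] (f : A →+* B) (I : Ideal A) (J : Ideal B)
    (hf : ∀ n, ∀ x ∈ I ^ n, f x ∈ J ^ n) (n : ℕ) (x : A) (hx : x ∈ I ^ n) :
    grMap f I J hf n (grMk I n x hx) = grMk J n (f x) (hf n x hx) := rfl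


lemma gen_mem {I : Ideal A} {a : A} (h : I = Ideal.span {a}) : a ∈ I := by
  rw [h]; exact Ideal.mem_span_singleton_self a

lemma gen_mem_pow_one {I : Ideal A} {a : A} (h : I = Ideal.span {a}) : a ∈ I ^ 1 := by
  rw [pow_one]; exact gen_mem h

lemma mem_pow_one {I : Ideal A} {a : A} (ha : a ∈ I) : a ∈ I ^ 1 := by
  rwa [pow_one]

lemma mul_mem_Itor {I : Ideal A} {x y : A} (hy : y ∈ Itor I A) :
    x * y ∈ Itor I A := by
  simpa using (Itor I A).smul_mem x hy

/-- Multiplicativity of a family of maps between graded pieces: `g` respects the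
multiplication of the conormal cones. -/
def GradedMul {A : Type*} [CommRing A] {B : Type*} [CommRing B] (I : Ideal A) (J : Ideal B)
    (g : ∀ n, GrPiece I n →+ GrPiece J n) : Prop :=
  ∀ (m n : ℕ) (x y : A) (hx : x ∈ I ^ m) (hy : y ∈ I ^ n) (u v : B) (hu : u ∈ J ^ m)
    (hv : v ∈ J ^ n),
    g m (grMk I m x hx) = grMk J m u hu →
    g n (grMk I n y hy) = grMk J n v hv →
    g (m + n) (grMk I (m + n) (x * y) (mul_mem_pow_add hx hy)) =
      grMk J (m + n) (u * v) (mul_mem_pow_add hu hv)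

section Tower

universe u

variable (R : ℕ → Type u) [∀ i, CommRing (R i)] (t : ∀ i, R i →+* R (i + 1))

/-- The composite transition map `R 0 → R i` of a tower. -/
def chain : ∀ i, R 0 →+* R i
  | 0 => RingHom.id (R 0)
  | (i + 1) => (t i).comp (chain i)

/-- The composite transition map `R 1 → R (i+1)` of a tower. -/
def chain1 : ∀ i, R 1 →+* R (i + 1)
  | 0 => RingHom.id (R 1)
  | (i + 1) => (t (i + 1)).comp (chain1 i)

variable (I0 : Ideal (R 0))

/-- The extension `I₀Rᵢ` of `I₀` to the `i`-th layer. -/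
def I0R (i : ℕ) : Ideal (R i) := I0.map (chain R t i)

lemma I0R_succ (i : ℕ) : I0R R t I0 (i + 1) = (I0R R t I0 i).map (t i) := by
  rw [I0R, I0R, Ideal.map_map]; rfl

/-- The induced map `t̄ᵢ : Rᵢ/I₀Rᵢ → Rᵢ₊₁/I₀Rᵢ₊₁`. -/
def tbar (i : ℕ) : R i ⧸ I0R R t I0 i →+* R (i + 1) ⧸ I0R R t I0 (i + 1) :=
  Ideal.quotientMap _ (t i) (by rw [I0R_succ]; exact Ideal.le_comap_map)

lemma t_pow_mem (i : ℕ) : ∀ n, ∀ x ∈ (I0R R t I0 i) ^ n, t i x ∈ (I0R R t I0 (i + 1)) ^ n := by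
  intro n x hx
  have : t i x ∈ Ideal.map (t i) ((I0R R t I0 i) ^ n) := Ideal.mem_map_of_mem _ hx
  rwa [Ideal.map_pow, ← I0R_succ] at this

/-- The extension `I₁Rᵢ₊₁` of a principal ideal `I₁ ⊆ R₁`. -/
def I1R (I1 : Ideal (R 1)) (i : ℕ) : Ideal (R (i + 1)) := I1.map (chain1 R t i)

variable (p : ℕ)

/-- The torsion-part conditions (g) of a (pre)perfectoid tower, for the `i`-th layer:
`I₀·(Rᵢ)_{I₀-tor} = 0` and existence of a bijection `(Fᵢ)_tor` compatible with `Fᵢ`. -/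
def CondG (F : ∀ i, R (i + 1) ⧸ I0R R t I0 (i + 1) →+* R i ⧸ I0R R t I0 i) (i : ℕ) : Prop :=
  (∀ a ∈ I0R R t I0 i, ∀ x ∈ Itor (I0R R t I0 i) (R i), a * x = 0) ∧
  ∃ Ftor : Itor (I0R R t I0 (i + 1)) (R (i + 1)) → Itor (I0R R t I0 i) (R i),
    Function.Bijective Ftor ∧
    ∀ x, Ideal.Quotient.mk (I0R R t I0 i) (Ftor x).1 =
      F i (Ideal.Quotient.mk (I0R R t I0 (i + 1)) x.1)

/-- The conormal-cone conditions (g') of Theorem 3.8, for the `i`-th layer: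
`I₀·(Rᵢ)_{I₀-tor} = 0` and existence of a graded ring isomorphism
`Φᵢ : gr_{I₁}(Rᵢ₊₁) → gr_{I₀}(Rᵢ)` whose degree-0 component, composed with the projection
`Rᵢ₊₁/I₀Rᵢ₊₁ → Rᵢ₊₁/I₁Rᵢ₊₁`, is `Fᵢ`. -/
def CondG' (F : ∀ i, R (i + 1) ⧸ I0R R t I0 (i + 1) →+* R i ⧸ I0R R t I0 i)
    (I1 : Ideal (R 1)) (i : ℕ) : Prop :=
  (∀ a ∈ I0R R t I0 i, ∀ x ∈ Itor (I0R R t I0 i) (R i), a * x = 0) ∧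
  ∃ g : ∀ n, GrPiece (I1R R t I1 i) n →+ GrPiece (I0R R t I0 i) n,
    (∀ n, Function.Bijective (g n)) ∧
    GradedMul (I1R R t I1 i) (I0R R t I0 i) g ∧
    ∀ (x : R (i + 1)) (u : R i),
      Ideal.Quotient.mk (I0R R t I0 i) u = F i (Ideal.Quotient.mk (I0R R t I0 (i + 1)) x) →
      g 0 (grMk (I1R R t I1 i) 0 x (mem_pow_zero _ x)) =
        grMk (I0R R t I0 i) 0 u (mem_pow_zero _ u)

/-- `R` together with the transition maps `t` is a preperfectoid tower arising from
`(R 0, I0)` (Definition 3.1: conditions (a)–(d), (f), (g)). -/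
def IsPreperfectoidTower : Prop :=
  (p : R 0) ∈ I0 ∧
  (∀ i, Function.Injective (tbar R t I0 i)) ∧
  I0.IsPrincipal ∧
  ∃ F : ∀ i, R (i + 1) ⧸ I0R R t I0 (i + 1) →+* R i ⧸ I0R R t I0 i,
    (∀ i x, tbar R t I0 i (F i x) = x ^ p) ∧
    (∀ i, Function.Surjective (F i)) ∧
    (∃ I1 : Ideal (R 1), I1.IsPrincipal ∧ I1 ^ p = I0R R t I0 1 ∧
      ∀ i, RingHom.ker (F i) =
        I1.map ((Ideal.Quotient.mk (I0R R t I0 (i + 1))).comp (chain1 R t i))) ∧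
    (∀ i, CondG R t I0 F i)

end Tower
universe u

namespace Aux

variable {A B : Type*} [CommRing A] [CommRing B]

lemma mem_pow_span {I : Ideal A} {α : A} (h : I = Ideal.span {α}) {n : ℕ} {x : A} :
    x ∈ I ^ n ↔ ∃ r, x = α ^ n * r := by
  subst h
  rw [Ideal.span_singleton_pow, Ideal.mem_span_singleton]
  exact ⟨fun ⟨c, hc⟩ => ⟨c, hc⟩, fun ⟨c, hc⟩ => ⟨c, hc⟩⟩

lemma mem_Itor_span {I : Ideal A} {α : A} (h : I = Ideal.span {α}) {x : A} :
    x ∈ Itor I A ↔ ∃ n, α ^ n * x = 0 := by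
  constructor
  · intro hx
    obtain ⟨n, hn⟩ := hx α (by rw [h]; exact Ideal.mem_span_singleton_self α)
    exact ⟨n, by simpa [smul_eq_mul] using hn⟩
  · rintro ⟨n, hn⟩ β hβ
    rw [h, Ideal.mem_span_singleton] at hβ
    obtain ⟨r, rfl⟩ := hβ
    refine ⟨n, ?_⟩
    have h2 : (α * r) ^ n * x = r ^ n * (α ^ n * x) := by ring
    rw [smul_eq_mul, h2, hn, mul_zero]

lemma grMk_congr (I : Ideal A) (n : ℕ) {x y : A} (hx : x ∈ I ^ n) (hy : y ∈ I ^ n)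
    (h : x = y) : grMk I n x hx = grMk I n y hy := by subst h; rfl

lemma grMk_add (I : Ideal A) (n : ℕ) {x y : A} (hx : x ∈ I ^ n) (hy : y ∈ I ^ n) :
    grMk I n x hx + grMk I n y hy = grMk I n (x + y) (add_mem hx hy) := rfl

lemma grMk_eq_zero_iff (I : Ideal A) (n : ℕ) {x : A} (hx : x ∈ I ^ n) :
    grMk I n x hx = 0 ↔ x ∈ I ^ (n + 1) := by
  rw [grMk, Submodule.Quotient.mk_eq_zero]
  exact Iff.rfl

lemma grMk_surj (I : Ideal A) {α : A} (hI : I = Ideal.span {α}) (n : ℕ) (ζ : GrPiece I n) :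
    ∃ x, ∃ h : α ^ n * x ∈ I ^ n, ζ = grMk I n (α ^ n * x) h := by
  obtain ⟨ξ, rfl⟩ := Submodule.Quotient.mk_surjective _ ζ
  obtain ⟨x, hx⟩ := (mem_pow_span hI).mp ξ.2
  refine ⟨x, hx ▸ ξ.2, ?_⟩
  exact congrArg _ (Subtype.ext hx)

end Aux

namespace Aux
variable {A : Type*} [CommRing A]
lemma mem_span_of {I : Ideal A} {α x : A} (hI : I = Ideal.span {α}) (h : x ∈ I) :
    ∃ r, x = α * r := by
  subst hI
  obtain ⟨r, hr⟩ := Ideal.mem_span_singleton.mp h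
  exact ⟨r, hr⟩
end Aux

namespace Aux2

open Aux

variable {A B : Type*} [CommRing A] [CommRing B]

lemma gen_e {p : ℕ} {J J0 : Ideal A} {b ta : A}
    (hJ : J = Ideal.span {b}) (hJ0 : J0 = Ideal.span {ta}) (hJp : J ^ p = J0) :
    ∃ e, ta = b ^ p * e := by
  have h1 : ta ∈ J ^ p := by rw [hJp, hJ0]; exact Ideal.mem_span_singleton_self ta
  exact (mem_pow_span hJ).mp h1

lemma gen_e' {p : ℕ} {J J0 : Ideal A} {b ta : A}
    (hJ : J = Ideal.span {b}) (hJ0 : J0 = Ideal.span {ta}) (hJp : J ^ p = J0) :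
    ∃ e', b ^ p = ta * e' := by
  have h1 : b ^ p ∈ J0 := by
    rw [← hJp]; exact (mem_pow_span hJ).mpr ⟨1, (mul_one _).symm⟩
  rw [hJ0, Ideal.mem_span_singleton] at h1
  obtain ⟨c, hc⟩ := h1
  exact ⟨c, hc⟩

lemma tor_b_ta {p : ℕ} {J0 : Ideal A} {b ta e e' : A} (hp : p ≠ 0)
    (hJ0 : J0 = Ideal.span {ta}) (he : ta = b ^ p * e) (he' : b ^ p = ta * e')
    (killA : ∀ x ∈ Itor J0 A, ta * x = 0) :
    ∀ x : A, (∃ n, b ^ n * x = 0) → b ^ p * x = 0 ∧ ta * x = 0 := by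
  rintro x ⟨n, hn⟩
  obtain ⟨m, hm⟩ : ∃ m, p * n = m + n :=
    ⟨p * n - n, (Nat.sub_add_cancel (Nat.le_mul_of_pos_left n (Nat.pos_of_ne_zero hp))).symm⟩
  have h1 : ta ^ n * x = 0 := by
    have hb : (b ^ p * e) ^ n * x = e ^ n * b ^ m * (b ^ n * x) := by
      rw [mul_pow, ← pow_mul, hm, pow_add]; ring
    rw [he, hb, hn, mul_zero]
  have hxt : x ∈ Itor J0 A := (mem_Itor_span hJ0).mpr ⟨n, h1⟩
  have h2 : ta * x = 0 := killA x hxt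
  refine ⟨?_, h2⟩
  have h3 : b ^ p * x = e' * (ta * x) := by rw [he']; ring
  rw [h3, h2, mul_zero]

lemma tor_a {K : Ideal B} {a : B} (hK : K = Ideal.span {a})
    (killB : ∀ x ∈ Itor K B, a * x = 0) :
    ∀ x : B, (∃ n, a ^ n * x = 0) → a * x = 0 :=
  fun x hx => killB x ((mem_Itor_span hK).mpr hx)

lemma Fzero_iff {p : ℕ} {J J0 : Ideal A} {K : Ideal B} (hp : p ≠ 0) (hJp : J ^ p = J0)
    {F : A ⧸ J0 →+* B ⧸ K} (hFk : RingHom.ker F = J.map (Ideal.Quotient.mk J0)) :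
    ∀ x : A, F (Ideal.Quotient.mk J0 x) = 0 ↔ x ∈ J := by
  have hle : J0 ≤ J := hJp ▸ Ideal.pow_le_self hp
  intro x
  constructor
  · intro hx
    have h1 : Ideal.Quotient.mk J0 x ∈ RingHom.ker F := RingHom.mem_ker.mpr hx
    rw [hFk, Ideal.mem_map_iff_of_surjective _ Ideal.Quotient.mk_surjective] at h1
    obtain ⟨y, hy, hyx⟩ := h1
    have h2 : y - x ∈ J0 := Ideal.Quotient.eq.mp hyx
    have h3 := J.sub_mem hy (hle h2)
    simpa using h3
  · intro hx
    have h1 : Ideal.Quotient.mk J0 x ∈ RingHom.ker F := hFk ▸ Ideal.mem_map_of_mem _ hx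
    exact RingHom.mem_ker.mp h1

end Aux2

namespace Aux3

open Aux Aux2

lemma fwd {A B : Type*} [CommRing A] [CommRing B]
    {p : ℕ} (hp : p ≠ 0)
    {J J0 : Ideal A} {K : Ideal B} {b ta : A} {a : B}
    (hJ : J = Ideal.span {b}) (hK : K = Ideal.span {a}) (hJ0 : J0 = Ideal.span {ta})
    (hJp : J ^ p = J0)
    {F : A ⧸ J0 →+* B ⧸ K} (hFs : Function.Surjective F)
    (hFk : RingHom.ker F = J.map (Ideal.Quotient.mk J0))
    (killB : ∀ x ∈ Itor K B, a * x = 0)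
    (killA : ∀ x ∈ Itor J0 A, ta * x = 0)
    (Ftor : Itor J0 A → Itor K B) (hbij : Function.Bijective Ftor)
    (hcomp : ∀ x, Ideal.Quotient.mk K (Ftor x).1 = F (Ideal.Quotient.mk J0 x.1)) :
    ∃ g : ∀ n, GrPiece J n →+ GrPiece K n,
      (∀ n, Function.Bijective (g n)) ∧ GradedMul J K g ∧
      ∀ (x : A) (u : B),
        Ideal.Quotient.mk K u = F (Ideal.Quotient.mk J0 x) →
        g 0 (grMk J 0 x (mem_pow_zero _ x)) = grMk K 0 u (mem_pow_zero _ u) := by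
  obtain ⟨e, he⟩ := gen_e hJ hJ0 hJp
  obtain ⟨e', he'⟩ := gen_e' hJ hJ0 hJp
  have torA := tor_b_ta hp hJ0 he he' killA
  have torB := tor_a hK killB
  have hF0 := Fzero_iff hp hJp hFk
  -- (G1) : torsion elements of J vanish
  have hG1 : ∀ x : A, b ^ p * x = 0 → x ∈ J → x = 0 := by
    intro x hbp hxJ
    have hxt : x ∈ Itor J0 A := (mem_Itor_span hJ0).mpr ⟨1, by
      rw [pow_one, he]
      calc b ^ p * e * x = e * (b ^ p * x) := by ring
        _ = 0 := by rw [hbp, mul_zero]⟩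
    have hz : ∀ η : Itor J0 A, F (Ideal.Quotient.mk J0 η.1) = 0 → (Ftor η).1 = 0 := by
      intro η hη
      have h1 : Ideal.Quotient.mk K (Ftor η).1 = 0 := by rw [hcomp]; exact hη
      have h2 : (Ftor η).1 ∈ K := by rwa [Ideal.Quotient.eq_zero_iff_mem] at h1
      obtain ⟨r, hr⟩ := mem_span_of hK h2
      have h3 : a * (Ftor η).1 = 0 := killB _ (Ftor η).2
      have h4 : a * r = 0 := torB r ⟨2, by
        have h5 : a ^ 2 * r = a * (a * r) := by ring
        rw [h5, ← hr]; exact h3⟩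
      rw [hr]; exact h4
    have hx0 : (Ftor ⟨x, hxt⟩).1 = 0 := hz _ ((hF0 x).mpr hxJ)
    have h00 : (Ftor ⟨0, zero_mem _⟩).1 = 0 := hz _ (by simp)
    have heq : Ftor ⟨x, hxt⟩ = Ftor ⟨0, zero_mem _⟩ := Subtype.ext (hx0.trans h00.symm)
    exact congrArg Subtype.val (hbij.1 heq)
  have hannb : ∀ n x, 1 ≤ n → b ^ n * x = 0 → b * x = 0 := by
    intro n x hn h
    obtain ⟨m, rfl⟩ : ∃ m, n = m + 1 := ⟨n - 1, (Nat.succ_pred_eq_of_pos hn).symm⟩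
    have h1 : b ^ m * (b * x) = 0 := by
      have h2 : b ^ m * (b * x) = b ^ (m + 1) * x := by rw [pow_succ]; ring
      rw [h2, h]
    have h2 : b ^ p * (b * x) = 0 := (torA _ ⟨m, h1⟩).1
    exact hG1 _ h2 (hJ ▸ Ideal.mem_span_singleton.mpr ⟨x, rfl⟩)
  -- the two key transfer statements
  have hWD : ∀ n x u, Ideal.Quotient.mk K u = F (Ideal.Quotient.mk J0 x) →
      b ^ n * x ∈ J ^ (n + 1) → a ^ n * u ∈ K ^ (n + 1) := by
    intro n x u hu hmem
    rcases Nat.eq_zero_or_pos n with rfl | hn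
    · have hxJ : x ∈ J := by
        have h := hmem; rw [pow_zero, one_mul, zero_add, pow_one] at h; exact h
      have h1 : Ideal.Quotient.mk K u = 0 := by rw [hu, (hF0 x).mpr hxJ]
      have h2 : u ∈ K := by rwa [Ideal.Quotient.eq_zero_iff_mem] at h1
      rw [pow_zero, one_mul, zero_add, pow_one]; exact h2
    · obtain ⟨r, hr⟩ := (mem_pow_span hJ).mp hmem
      have h1 : b ^ n * (x - b * r) = 0 := by
        have h2 : b ^ n * (x - b * r) = b ^ n * x - b ^ (n + 1) * r := by rw [pow_succ]; ring
        rw [h2, hr, sub_self]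
      have h2 : b * (x - b * r) = 0 := hannb n _ hn h1
      have h3 : (x - b * r) ∈ Itor J0 A := (mem_Itor_span hJ0).mpr ⟨1, by
        rw [pow_one]; exact (torA _ ⟨1, by rwa [pow_one]⟩).2⟩
      have h4 : Ideal.Quotient.mk K (Ftor ⟨x - b * r, h3⟩).1 = Ideal.Quotient.mk K u := by
        rw [hcomp]
        have h5 : F (Ideal.Quotient.mk J0 (b * r)) = 0 :=
          (hF0 _).mpr (hJ ▸ Ideal.mem_span_singleton.mpr ⟨r, rfl⟩)
        calc F (Ideal.Quotient.mk J0 (x - b * r))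
            = F (Ideal.Quotient.mk J0 x) - F (Ideal.Quotient.mk J0 (b * r)) := by
              rw [map_sub, map_sub]
          _ = Ideal.Quotient.mk K u := by rw [h5, sub_zero, hu]
      have h6 : u - (Ftor ⟨x - b * r, h3⟩).1 ∈ K := Ideal.Quotient.eq.mp h4.symm
      obtain ⟨s, hs⟩ := mem_span_of hK h6
      have h7 : a * (Ftor ⟨x - b * r, h3⟩).1 = 0 := killB _ (Ftor ⟨x - b * r, h3⟩).2
      obtain ⟨m, rfl⟩ : ∃ m, n = m + 1 := ⟨n - 1, (Nat.succ_pred_eq_of_pos hn).symm⟩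
      refine (mem_pow_span hK).mpr ⟨s, ?_⟩
      have hu2 : u = (Ftor ⟨x - b * r, h3⟩).1 + a * s := by rw [← hs]; ring
      rw [hu2]
      have h8 : a ^ (m + 1) * ((Ftor ⟨x - b * r, h3⟩).1 + a * s)
          = a ^ m * (a * (Ftor ⟨x - b * r, h3⟩).1) + a ^ (m + 1 + 1) * s := by ring
      rw [h8, h7, mul_zero, zero_add]
  have hINJ : ∀ n x u, Ideal.Quotient.mk K u = F (Ideal.Quotient.mk J0 x) →
      a ^ n * u ∈ K ^ (n + 1) → b ^ n * x ∈ J ^ (n + 1) := by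
    intro n x u hu hmem
    rcases Nat.eq_zero_or_pos n with rfl | hn
    · have huK : u ∈ K := by
        have h := hmem; rw [pow_zero, one_mul, zero_add, pow_one] at h; exact h
      have h1 : F (Ideal.Quotient.mk J0 x) = 0 := by
        rw [← hu, Ideal.Quotient.eq_zero_iff_mem]; exact huK
      have h2 : x ∈ J := (hF0 x).mp h1
      rw [pow_zero, one_mul, zero_add, pow_one]; exact h2
    · obtain ⟨s, hs⟩ := (mem_pow_span hK).mp hmem
      have h1 : a ^ n * (u - a * s) = 0 := by
        have h2 : a ^ n * (u - a * s) = a ^ n * u - a ^ (n + 1) * s := by rw [pow_succ]; ring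
        rw [h2, hs, sub_self]
      have h2 : a * (u - a * s) = 0 := torB _ ⟨n, h1⟩
      have h3 : (u - a * s) ∈ Itor K B := (mem_Itor_span hK).mpr ⟨1, by rwa [pow_one]⟩
      obtain ⟨ξ, hξ⟩ := hbij.2 ⟨u - a * s, h3⟩
      have h4 : Ideal.Quotient.mk K (u - a * s) = F (Ideal.Quotient.mk J0 ξ.1) := by
        rw [← hcomp, hξ]
      have h5 : F (Ideal.Quotient.mk J0 (x - ξ.1)) = 0 := by
        rw [map_sub, map_sub, ← hu, ← h4, ← map_sub]
        have h6 : u - (u - a * s) = a * s := by ring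
        rw [h6, Ideal.Quotient.eq_zero_iff_mem]
        exact hK ▸ Ideal.mem_span_singleton.mpr ⟨s, rfl⟩
      have h6 : x - ξ.1 ∈ J := (hF0 _).mp h5
      obtain ⟨r, hr⟩ := mem_span_of hJ h6
      have h7 : ta * ξ.1 = 0 := killA _ ξ.2
      have h8 : b ^ p * ξ.1 = 0 := by
        have h9 : b ^ p * ξ.1 = e' * (ta * ξ.1) := by rw [he']; ring
        rw [h9, h7, mul_zero]
      have h9 : b * ξ.1 = 0 := hannb p _ (Nat.one_le_iff_ne_zero.mpr hp) h8
      obtain ⟨m, rfl⟩ : ∃ m, n = m + 1 := ⟨n - 1, (Nat.succ_pred_eq_of_pos hn).symm⟩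
      refine (mem_pow_span hJ).mpr ⟨r, ?_⟩
      have hx2 : x = ξ.1 + b * r := by rw [← hr]; ring
      rw [hx2]
      have h10 : b ^ (m + 1) * (ξ.1 + b * r)
          = b ^ m * (b * ξ.1) + b ^ (m + 1 + 1) * r := by ring
      rw [h10, h9, mul_zero, zero_add]
  -- choice functions
  choose v hv using fun x : A => Ideal.Quotient.mk_surjective (F (Ideal.Quotient.mk J0 x))
  choose xf hxf hxeq using fun n (ζ : GrPiece J n) => grMk_surj J hJ n ζ
  have hmemK : ∀ (n : ℕ) (s : B), a ^ n * s ∈ K ^ n := fun n s => (mem_pow_span hK).mpr ⟨s, rfl⟩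
  have hmemJ : ∀ (n : ℕ) (s : A), b ^ n * s ∈ J ^ n := fun n s => (mem_pow_span hJ).mpr ⟨s, rfl⟩
  have hraw : ∀ (n : ℕ) x u (hx : b ^ n * x ∈ J ^ n) (hu : a ^ n * u ∈ K ^ n),
      Ideal.Quotient.mk K u = F (Ideal.Quotient.mk J0 x) →
      grMk K n (a ^ n * v (xf n (grMk J n (b ^ n * x) hx))) (hmemK n _)
        = grMk K n (a ^ n * u) hu := by
    intro n x u hx hu huF
    have h1 : b ^ n * xf n (grMk J n (b ^ n * x) hx) - b ^ n * x ∈ J ^ (n + 1) := by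
      rw [← grMk_eq_iff J n (hxf n _) hx]
      exact (hxeq n (grMk J n (b ^ n * x) hx)).symm
    have h2 : Ideal.Quotient.mk K (v (xf n (grMk J n (b ^ n * x) hx)) - u)
        = F (Ideal.Quotient.mk J0 (xf n (grMk J n (b ^ n * x) hx) - x)) := by
      simp only [map_sub, hv, huF]
    have h3 : b ^ n * (xf n (grMk J n (b ^ n * x) hx) - x) ∈ J ^ (n + 1) := by
      rw [mul_sub]; exact h1
    have h4 := hWD n _ _ h2 h3
    rw [mul_sub] at h4
    exact (grMk_eq_iff K n _ _).mpr h4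
  have hadd : ∀ (n : ℕ) (ζ ζ' : GrPiece J n),
      grMk K n (a ^ n * v (xf n (ζ + ζ'))) (hmemK n _)
        = grMk K n (a ^ n * v (xf n ζ)) (hmemK n _)
          + grMk K n (a ^ n * v (xf n ζ')) (hmemK n _) := by
    intro n ζ ζ'
    obtain ⟨x, hx, rfl⟩ := grMk_surj J hJ n ζ
    obtain ⟨x', hx', rfl⟩ := grMk_surj J hJ n ζ'
    have hsum : grMk J n (b ^ n * x) hx + grMk J n (b ^ n * x') hx'
        = grMk J n (b ^ n * (x + x')) (hmemJ n _) := by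
      rw [grMk_add]; exact grMk_congr _ _ _ _ (by ring)
    rw [hsum, hraw n (x + x') (v x + v x') (hmemJ n _) (hmemK n _)
          (by simp only [map_add, hv]),
        hraw n x (v x) hx (hmemK n _) (hv x),
        hraw n x' (v x') hx' (hmemK n _) (hv x'), grMk_add]
    exact grMk_congr _ _ _ _ (by ring)
  refine ⟨fun n => AddMonoidHom.mk'
      (fun ζ => grMk K n (a ^ n * v (xf n ζ)) (hmemK n _)) (hadd n), ?_, ?_, ?_⟩
  · -- bijectivity
    intro n
    constructor
    · intro ζ ζ' hζζ
      obtain ⟨x, hx, rfl⟩ := grMk_surj J hJ n ζ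
      obtain ⟨x', hx', rfl⟩ := grMk_surj J hJ n ζ'
      have hζζ' : grMk K n (a ^ n * v x) (hmemK n _) = grMk K n (a ^ n * v x') (hmemK n _) := by
        rw [← hraw n x (v x) hx (hmemK n _) (hv x),
            ← hraw n x' (v x') hx' (hmemK n _) (hv x')]
        exact hζζ
      have h1 : a ^ n * v x - a ^ n * v x' ∈ K ^ (n + 1) := (grMk_eq_iff _ _ _ _).mp hζζ'
      rw [← mul_sub] at h1
      have h2 : Ideal.Quotient.mk K (v x - v x') = F (Ideal.Quotient.mk J0 (x - x')) := by
        simp only [map_sub, hv]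
      have h3 := hINJ n _ _ h2 h1
      rw [mul_sub] at h3
      exact (grMk_eq_iff _ _ _ _).mpr h3
    · intro ζ'
      obtain ⟨s, hs, rfl⟩ := grMk_surj K hK n ζ'
      obtain ⟨q, hq⟩ := hFs (Ideal.Quotient.mk K s)
      obtain ⟨x, rfl⟩ := Ideal.Quotient.mk_surjective q
      exact ⟨grMk J n (b ^ n * x) (hmemJ n x), hraw n x s (hmemJ n x) hs hq.symm⟩
  · -- multiplicativity
    intro m n x y hx hy u w' hu hw' h1 h2
    obtain ⟨x₀, hx₀⟩ := (mem_pow_span hJ).mp hx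
    obtain ⟨y₀, hy₀⟩ := (mem_pow_span hJ).mp hy
    have hgx : grMk K m (a ^ m * v (xf m (grMk J m x hx))) (hmemK m _) = grMk K m u hu := h1
    have hgy : grMk K n (a ^ n * v (xf n (grMk J n y hy))) (hmemK n _) = grMk K n w' hw' := h2
    have hcx : grMk J m x hx = grMk J m (b ^ m * x₀) (hmemJ m x₀) := grMk_congr _ _ _ _ hx₀
    have hcy : grMk J n y hy = grMk J n (b ^ n * y₀) (hmemJ n y₀) := grMk_congr _ _ _ _ hy₀
    rw [hcx, hraw m x₀ (v x₀) (hmemJ m x₀) (hmemK m _) (hv x₀)] at hgx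
    rw [hcy, hraw n y₀ (v y₀) (hmemJ n y₀) (hmemK n _) (hv y₀)] at hgy
    have hd1 : a ^ m * v x₀ - u ∈ K ^ (m + 1) := (grMk_eq_iff _ _ _ _).mp hgx
    have hd2 : a ^ n * v y₀ - w' ∈ K ^ (n + 1) := (grMk_eq_iff _ _ _ _).mp hgy
    have hxy : x * y = b ^ (m + n) * (x₀ * y₀) := by rw [hx₀, hy₀, pow_add]; ring
    have hprod : Ideal.Quotient.mk K (v x₀ * v y₀) = F (Ideal.Quotient.mk J0 (x₀ * y₀)) := by
      simp only [map_mul, hv]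
    have hcxy : grMk J (m + n) (x * y) (mul_mem_pow_add hx hy)
        = grMk J (m + n) (b ^ (m + n) * (x₀ * y₀)) (hmemJ (m + n) _) := grMk_congr _ _ _ _ hxy
    rw [hcxy]
    refine Eq.trans
      (hraw (m + n) (x₀ * y₀) (v x₀ * v y₀) (hmemJ (m + n) _) (hmemK (m + n) _) hprod) ?_
    refine (grMk_eq_iff _ _ _ _).mpr ?_
    have key : a ^ (m + n) * (v x₀ * v y₀) - u * w'
        = (a ^ m * v x₀ - u) * (a ^ n * v y₀) + u * (a ^ n * v y₀ - w') := by
      rw [pow_add]; ring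
    rw [key]
    refine add_mem ?_ ?_
    · have h3 := mul_mem_pow_add hd1 (hmemK n (v y₀))
      have hidx : m + 1 + n = m + n + 1 := by omega
      rwa [hidx] at h3
    · have h3 := mul_mem_pow_add hu hd2
      have hidx : m + (n + 1) = m + n + 1 := by omega
      rwa [hidx] at h3
  · -- degree-zero compatibility
    intro x u hu
    have h0 : grMk J 0 x (mem_pow_zero J x) = grMk J 0 (b ^ 0 * x) (hmemJ 0 x) :=
      grMk_congr _ _ _ _ (by rw [pow_zero, one_mul])
    rw [h0]
    exact Eq.trans (hraw 0 x u (hmemJ 0 x) (hmemK 0 u) hu)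
      (grMk_congr _ _ _ _ (by rw [pow_zero, one_mul]))

end Aux3

namespace Aux4

open Aux Aux2

lemma bwd {A B : Type*} [CommRing A] [CommRing B]
    {p : ℕ} (hp : p ≠ 0)
    {J J0 : Ideal A} {K : Ideal B} {b ta : A} {a : B}
    (hJ : J = Ideal.span {b}) (hK : K = Ideal.span {a}) (hJ0 : J0 = Ideal.span {ta})
    (hJp : J ^ p = J0)
    {F : A ⧸ J0 →+* B ⧸ K} (hFs : Function.Surjective F)
    (hFk : RingHom.ker F = J.map (Ideal.Quotient.mk J0))
    (killB : ∀ x ∈ Itor K B, a * x = 0)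
    (killA : ∀ x ∈ Itor J0 A, ta * x = 0)
    (g : ∀ n, GrPiece J n →+ GrPiece K n)
    (hgbij : ∀ n, Function.Bijective (g n))
    (hgmul : GradedMul J K g)
    (hg0 : ∀ (x : A) (u : B), Ideal.Quotient.mk K u = F (Ideal.Quotient.mk J0 x) →
      g 0 (grMk J 0 x (mem_pow_zero _ x)) = grMk K 0 u (mem_pow_zero _ u)) :
    ∃ Ftor : Itor J0 A → Itor K B, Function.Bijective Ftor ∧
      ∀ x, Ideal.Quotient.mk K (Ftor x).1 = F (Ideal.Quotient.mk J0 x.1) := by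
  obtain ⟨e, he⟩ := gen_e hJ hJ0 hJp
  obtain ⟨e', he'⟩ := gen_e' hJ hJ0 hJp
  have torB := tor_a hK killB
  have hF0 := Fzero_iff hp hJp hFk
  have hp1 : 1 ≤ p := Nat.one_le_iff_ne_zero.mpr hp
  choose v hv using fun x : A => Ideal.Quotient.mk_surjective (F (Ideal.Quotient.mk J0 x))
  have hmemK : ∀ (n : ℕ) (s : B), a ^ n * s ∈ K ^ n := fun n s => (mem_pow_span hK).mpr ⟨s, rfl⟩
  have hmemJ : ∀ (n : ℕ) (s : A), b ^ n * s ∈ J ^ n := fun n s => (mem_pow_span hJ).mpr ⟨s, rfl⟩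
  have hb1 : b ∈ J ^ 1 := by rw [pow_one, hJ]; exact Ideal.mem_span_singleton_self b
  have ha1 : a ∈ K ^ 1 := by rw [pow_one, hK]; exact Ideal.mem_span_singleton_self a
  -- the image of b in degree one
  obtain ⟨wξ, hwξ⟩ := Submodule.Quotient.mk_surjective _ (g 1 (grMk J 1 b hb1))
  have hw1 : (wξ : B) ∈ K ^ 1 := wξ.2
  have hgw : g 1 (grMk J 1 b hb1) = grMk K 1 (wξ : B) hw1 := hwξ.symm
  obtain ⟨c, hc⟩ := mem_span_of hK (by rw [← pow_one K]; exact hw1)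
  set w : B := (wξ : B) with hwdef
  -- the multiplicative formula
  have hpow : ∀ (n : ℕ) (x : A) (u : B) (hx : b ^ n * x ∈ J ^ n) (hu : w ^ n * u ∈ K ^ n),
      Ideal.Quotient.mk K u = F (Ideal.Quotient.mk J0 x) →
      g n (grMk J n (b ^ n * x) hx) = grMk K n (w ^ n * u) hu := by
    intro n
    induction n with
    | zero =>
      intro x u hx hu huF
      have h1 : grMk J 0 (b ^ 0 * x) hx = grMk J 0 x (mem_pow_zero _ x) :=
        grMk_congr _ _ _ _ (by rw [pow_zero, one_mul])
      have h2 : grMk K 0 u (mem_pow_zero _ u) = grMk K 0 (w ^ 0 * u) hu :=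
        grMk_congr _ _ _ _ (by rw [pow_zero, one_mul])
      rw [h1, hg0 x u huF, h2]
    | succ n IH =>
      intro x u hx hu huF
      have hx' : b ^ n * x ∈ J ^ n := hmemJ n x
      have hu' : w ^ n * u ∈ K ^ n := by
        refine (mem_pow_span hK).mpr ⟨c ^ n * u, ?_⟩
        rw [hc, mul_pow]; ring
      have h3 := hgmul n 1 (b ^ n * x) b hx' hb1 (w ^ n * u) w hu' hw1
        (IH x u hx' hu' huF) hgw
      have h4 : grMk J (n + 1) (b ^ (n + 1) * x) hx
          = grMk J (n + 1) ((b ^ n * x) * b) (mul_mem_pow_add hx' hb1) :=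
        grMk_congr _ _ _ _ (by rw [pow_succ]; ring)
      have h5 : grMk K (n + 1) ((w ^ n * u) * w) (mul_mem_pow_add hu' hw1)
          = grMk K (n + 1) (w ^ (n + 1) * u) hu :=
        grMk_congr _ _ _ _ (by rw [pow_succ]; ring)
      rw [h4, h3, h5]
  -- a quasi-inverse for c modulo (a) + Ann(a)
  obtain ⟨ζ, hζ⟩ := (hgbij 1).2 (grMk K 1 a ha1)
  obtain ⟨x₁, hx₁mem, hζeq⟩ := grMk_surj J hJ 1 ζ
  have hu₁ : w ^ 1 * v x₁ ∈ K ^ 1 := by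
    refine (mem_pow_span hK).mpr ⟨c ^ 1 * v x₁, ?_⟩
    rw [hc, mul_pow]; ring
  have h6 : g 1 (grMk J 1 (b ^ 1 * x₁) hx₁mem) = grMk K 1 (w ^ 1 * v x₁) hu₁ :=
    hpow 1 x₁ (v x₁) _ _ (hv x₁)
  have h7 : grMk K 1 (w ^ 1 * v x₁) hu₁ = grMk K 1 a ha1 := by
    rw [← h6, ← hζeq]; exact hζ
  have h8 : w ^ 1 * v x₁ - a ∈ K ^ (1 + 1) := (grMk_eq_iff _ _ _ _).mp h7
  obtain ⟨d, hd⟩ := (mem_pow_span hK).mp h8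
  have hδ : a * (c * v x₁ - 1 - a * d) = 0 := by
    rw [pow_one, hc] at hd
    linear_combination hd
  have Linv : ∀ (u : B) (m : ℕ), (∃ r z, c ^ m * u = a * r + z ∧ a * z = 0) →
      ∃ r z, u = a * r + z ∧ a * z = 0 := by
    intro u m
    induction m with
    | zero =>
      rintro ⟨r, z, h1, h2⟩
      exact ⟨r, z, by rw [pow_zero, one_mul] at h1; exact h1, h2⟩
    | succ m IH =>
      rintro ⟨r, z, h1, h2⟩
      apply IH
      refine ⟨v x₁ * r - d * (c ^ m * u), v x₁ * z - (c * v x₁ - 1 - a * d) * (c ^ m * u), ?_, ?_⟩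
      · have hexp : c ^ (m + 1) * u = c * (c ^ m * u) := by rw [pow_succ]; ring
        rw [hexp] at h1
        linear_combination v x₁ * h1
      · have h3 : a * (v x₁ * z - (c * v x₁ - 1 - a * d) * (c ^ m * u))
            = v x₁ * (a * z) - (a * (c * v x₁ - 1 - a * d)) * (c ^ m * u) := by ring
        rw [h3, h2, hδ]; ring
  -- the forward transfer
  have STARfwd : ∀ (n : ℕ) (x : A) (u : B),
      Ideal.Quotient.mk K u = F (Ideal.Quotient.mk J0 x) →
      b ^ n * x ∈ J ^ (n + 1) → 1 ≤ n → ∃ r z, u = a * r + z ∧ a * z = 0 := by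
    intro n x u huF hmem hn
    have h1 : grMk J n (b ^ n * x) (hmemJ n x) = 0 := (grMk_eq_zero_iff _ _ _).mpr hmem
    have h2 : g n (grMk J n (b ^ n * x) (hmemJ n x)) = 0 := by rw [h1, map_zero]
    have hu' : w ^ n * u ∈ K ^ n := by
      refine (mem_pow_span hK).mpr ⟨c ^ n * u, ?_⟩
      rw [hc, mul_pow]; ring
    have h3 : grMk K n (w ^ n * u) hu' = 0 := by
      rw [← hpow n x u (hmemJ n x) hu' huF]; exact h2
    have h4 : w ^ n * u ∈ K ^ (n + 1) := (grMk_eq_zero_iff _ _ _).mp h3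
    obtain ⟨s, hs⟩ := (mem_pow_span hK).mp h4
    have h5 : a ^ n * (c ^ n * u - a * s) = 0 := by
      have h6 : a ^ n * (c ^ n * u - a * s) = (a * c) ^ n * u - a ^ (n + 1) * s := by
        rw [mul_pow, pow_succ]; ring
      rw [h6, ← hc, hs, sub_self]
    have h6 : a * (c ^ n * u - a * s) = 0 := torB _ ⟨n, h5⟩
    exact Linv u n ⟨s, c ^ n * u - a * s, by ring, h6⟩
  -- torsion translations
  have torJ0 : ∀ x : A, ta * x = 0 → x ∈ Itor J0 A := fun x h =>
    (mem_Itor_span hJ0).mpr ⟨1, by rwa [pow_one]⟩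
  have hbp_ta : ∀ x : A, ta * x = 0 → b ^ p * x = 0 := by
    intro x h
    have h1 : b ^ p * x = e' * (ta * x) := by rw [he']; ring
    rw [h1, h, mul_zero]
  have hta_bp : ∀ x : A, b ^ p * x = 0 → ta * x = 0 := by
    intro x h
    have h1 : ta * x = e * (b ^ p * x) := by rw [he]; ring
    rw [h1, h, mul_zero]
  -- the key vanishing step
  have hstep : ∀ (n : ℕ), 1 ≤ n → ∀ x : A, ta * x = 0 → x ∈ J ^ n → x ∈ J ^ (n + 1) := by
    intro n hn x htax hxn
    obtain ⟨y, hy⟩ := (mem_pow_span hJ).mp hxn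
    have h1 : b ^ (n + p) * y = 0 := by
      have h2 : b ^ (n + p) * y = b ^ p * (b ^ n * y) := by rw [pow_add]; ring
      rw [h2, ← hy]; exact hbp_ta x htax
    obtain ⟨r, z, hrz, haz⟩ := STARfwd (n + p) y (v y) (hv y)
      (by rw [h1]; exact zero_mem _) (by omega)
    have h3 : w ^ n * v y ∈ K ^ (n + 1) := by
      refine (mem_pow_span hK).mpr ⟨c ^ n * r, ?_⟩
      obtain ⟨m, rfl⟩ : ∃ m, n = m + 1 := ⟨n - 1, (Nat.succ_pred_eq_of_pos hn).symm⟩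
      rw [hrz, hc]
      have h4 : (a * c) ^ (m + 1) * (a * r + z)
          = a ^ (m + 1 + 1) * (c ^ (m + 1) * r) + (a ^ m * c ^ (m + 1)) * (a * z) := by ring
      rw [h4, haz, mul_zero, add_zero]
    have hu' : w ^ n * v y ∈ K ^ n := (Ideal.pow_le_pow_right (Nat.le_succ n)) h3
    have h4 : g n (grMk J n (b ^ n * y) (hmemJ n y)) = 0 := by
      rw [hpow n y (v y) (hmemJ n y) hu' (hv y)]
      exact (grMk_eq_zero_iff _ _ _).mpr h3
    have h5 := (hgbij n).1 (h4.trans (map_zero (g n)).symm)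
    have h6 : b ^ n * y ∈ J ^ (n + 1) := (grMk_eq_zero_iff _ _ _).mp h5
    rwa [← hy] at h6
  -- (G1)
  have hG1' : ∀ x : A, ta * x = 0 → x ∈ J → x = 0 := by
    intro x htax hxJ
    have hall : ∀ m : ℕ, x ∈ J ^ (m + 1) := by
      intro m
      induction m with
      | zero => simpa using hxJ
      | succ m IH => exact hstep (m + 1) (by omega) x htax IH
    have hxp : x ∈ J0 := by
      rw [← hJp]
      obtain ⟨m, rfl⟩ : ∃ m, p = m + 1 := ⟨p - 1, (Nat.succ_pred_eq_of_pos hp1).symm⟩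
      exact hall m
    obtain ⟨ρ, hρ⟩ := mem_span_of hJ0 hxp
    have h1 : ta ^ 2 * ρ = 0 := by
      have h2 : ta ^ 2 * ρ = ta * (ta * ρ) := by ring
      rw [h2, ← hρ]; exact htax
    have h2 : ta * ρ = 0 := killA ρ ((mem_Itor_span hJ0).mpr ⟨2, h1⟩)
    rw [hρ]; exact h2
  -- construction of Ftor
  have hex : ∀ ξ : Itor J0 A, ∃ z : B, a * z = 0 ∧
      Ideal.Quotient.mk K z = F (Ideal.Quotient.mk J0 ξ.1) := by
    intro ξ
    have h1 : ta * ξ.1 = 0 := killA _ ξ.2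
    have h2 : b ^ p * ξ.1 = 0 := hbp_ta _ h1
    obtain ⟨r, z, hrz, haz⟩ := STARfwd p ξ.1 (v ξ.1) (hv ξ.1)
      (by rw [h2]; exact zero_mem _) hp1
    refine ⟨z, haz, ?_⟩
    have h3 : Ideal.Quotient.mk K (a * r) = 0 := by
      rw [Ideal.Quotient.eq_zero_iff_mem]
      exact hK ▸ Ideal.mem_span_singleton.mpr ⟨r, rfl⟩
    calc Ideal.Quotient.mk K z
        = Ideal.Quotient.mk K (v ξ.1) - Ideal.Quotient.mk K (a * r) := by
          rw [← map_sub]; congr 1; rw [hrz]; ring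
      _ = F (Ideal.Quotient.mk J0 ξ.1) := by rw [h3, sub_zero, hv]
  choose zf hzf hzc using hex
  refine ⟨fun ξ => ⟨zf ξ, (mem_Itor_span hK).mpr ⟨1, by rw [pow_one]; exact hzf ξ⟩⟩,
    ⟨?_, ?_⟩, hzc⟩
  · -- injectivity
    intro ξ ξ' hξξ
    have h1 : zf ξ = zf ξ' := congrArg Subtype.val hξξ
    have h2 : F (Ideal.Quotient.mk J0 (ξ.1 - ξ'.1)) = 0 := by
      simp only [map_sub]
      rw [← hzc, ← hzc, h1, sub_self]
    have h3 : ξ.1 - ξ'.1 ∈ J := (hF0 _).mp h2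
    have h4 : ta * (ξ.1 - ξ'.1) = 0 := by
      rw [mul_sub, killA _ ξ.2, killA _ ξ'.2, sub_self]
    have h5 := hG1' _ h4 h3
    exact Subtype.ext (by rw [← sub_eq_zero]; exact h5)
  · -- surjectivity
    intro η
    have h1 : a * η.1 = 0 := killB _ η.2
    obtain ⟨q, hq⟩ := hFs (Ideal.Quotient.mk K η.1)
    obtain ⟨x₀, rfl⟩ := Ideal.Quotient.mk_surjective q
    have h2 : Ideal.Quotient.mk K (v x₀ - η.1) = 0 := by
      rw [map_sub, hv, hq, sub_self]
    have h3 : v x₀ - η.1 ∈ K := by rwa [Ideal.Quotient.eq_zero_iff_mem] at h2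
    obtain ⟨s₂, hs₂⟩ := mem_span_of hK h3
    have h4 : w ^ p * v x₀ ∈ K ^ (p + 1) := by
      refine (mem_pow_span hK).mpr ⟨c ^ p * s₂, ?_⟩
      obtain ⟨m, rfl⟩ : ∃ m, p = m + 1 := ⟨p - 1, (Nat.succ_pred_eq_of_pos hp1).symm⟩
      have hvx : v x₀ = η.1 + a * s₂ := by rw [← hs₂]; ring
      rw [hvx, hc]
      have h5 : (a * c) ^ (m + 1) * (η.1 + a * s₂)
          = (a ^ m * c ^ (m + 1)) * (a * η.1) + a ^ (m + 1 + 1) * (c ^ (m + 1) * s₂) := by ring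
      rw [h5, h1, mul_zero, zero_add]
    have hu' : w ^ p * v x₀ ∈ K ^ p := (Ideal.pow_le_pow_right (Nat.le_succ p)) h4
    have h5 : g p (grMk J p (b ^ p * x₀) (hmemJ p x₀)) = 0 := by
      rw [hpow p x₀ (v x₀) (hmemJ p x₀) hu' (hv x₀)]
      exact (grMk_eq_zero_iff _ _ _).mpr h4
    have h6 := (hgbij p).1 (h5.trans (map_zero (g p)).symm)
    have h7 : b ^ p * x₀ ∈ J ^ (p + 1) := (grMk_eq_zero_iff _ _ _).mp h6
    obtain ⟨r, hr⟩ := (mem_pow_span hJ).mp h7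
    have h8 : b ^ p * (x₀ - b * r) = 0 := by
      have h9 : b ^ p * (x₀ - b * r) = b ^ p * x₀ - b ^ (p + 1) * r := by rw [pow_succ]; ring
      rw [h9, hr, sub_self]
    have h9 : ta * (x₀ - b * r) = 0 := hta_bp _ h8
    refine ⟨⟨x₀ - b * r, torJ0 _ h9⟩, ?_⟩
    have h10 : F (Ideal.Quotient.mk J0 (b * r)) = 0 :=
      (hF0 _).mpr (hJ ▸ Ideal.mem_span_singleton.mpr ⟨r, rfl⟩)
    have h11 : Ideal.Quotient.mk K (zf ⟨x₀ - b * r, torJ0 _ h9⟩) = Ideal.Quotient.mk K η.1 := by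
      rw [hzc ⟨x₀ - b * r, torJ0 _ h9⟩]
      calc F (Ideal.Quotient.mk J0 (x₀ - b * r))
          = F (Ideal.Quotient.mk J0 x₀) - F (Ideal.Quotient.mk J0 (b * r)) := by
            simp only [map_sub]
        _ = Ideal.Quotient.mk K η.1 := by rw [h10, sub_zero, hq]
    have h12 : zf ⟨x₀ - b * r, torJ0 _ h9⟩ - η.1 ∈ K := Ideal.Quotient.eq.mp h11
    obtain ⟨m₂, hm₂⟩ := mem_span_of hK h12
    have h13 : a * (zf ⟨x₀ - b * r, torJ0 _ h9⟩ - η.1) = 0 := by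
      rw [mul_sub, hzf ⟨x₀ - b * r, torJ0 _ h9⟩, h1, sub_self]
    have h14 : a * m₂ = 0 := torB m₂ ⟨2, by
      have h15 : a ^ 2 * m₂ = a * (a * m₂) := by ring
      rw [h15, ← hm₂]; exact h13⟩
    have h15 : zf ⟨x₀ - b * r, torJ0 _ h9⟩ = η.1 := by
      rw [← sub_eq_zero, hm₂]; exact h14
    exact Subtype.ext h15

end Aux4


section Assembly

universe v

lemma chain_split {R : ℕ → Type v} [∀ i, CommRing (R i)] (t : ∀ i, R i →+* R (i + 1)) :
    ∀ i, chain R t (i + 1) = (chain1 R t i).comp (chain R t 1)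
  | 0 => by
    show chain R t 1 = (chain1 R t 0).comp (chain R t 1)
    exact (RingHom.id_comp _).symm
  | (i + 1) => by
    show (t (i + 1)).comp (chain R t (i + 1)) = (chain1 R t (i + 1)).comp (chain R t 1)
    rw [chain_split t i]
    rfl

end Assembly

/-- **Theorem 3.8 (Main theorem).** For a purely inseparable tower satisfying (d), (e), (f),
condition (g) is equivalent to condition (g'). -/
theorem stmt13
    (p : ℕ) (hp : p.Prime)
    {R : ℕ → Type u} [∀ i, CommRing (R i)] (t : ∀ i, R i →+* R (i + 1))
    (I0 : Ideal (R 0))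
    (hp0 : (p : R 0) ∈ I0)
    (hb : ∀ i, Function.Injective (tbar R t I0 i))
    (F : ∀ i, R (i + 1) ⧸ I0R R t I0 (i + 1) →+* R i ⧸ I0R R t I0 i)
    (hF : ∀ i x, tbar R t I0 i (F i x) = x ^ p)
    (hd : ∀ i, Function.Surjective (F i))
    (hZar : ∀ i, ∀ x ∈ I0R R t I0 i, IsUnit (1 + x))
    (hI0 : I0.IsPrincipal)
    (I1 : Ideal (R 1)) (hI1 : I1.IsPrincipal)
    (hI1p : I1 ^ p = I0R R t I0 1)
    (hker : ∀ i, RingHom.ker (F i) =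
      I1.map ((Ideal.Quotient.mk (I0R R t I0 (i + 1))).comp (chain1 R t i))) :
    (∀ i, CondG R t I0 F i) ↔ (∀ i, CondG' R t I0 F I1 i) := by
  obtain ⟨a0, ha0⟩ := hI0
  obtain ⟨b1, hb1⟩ := hI1
  have ha0' : I0 = Ideal.span {a0} := ha0
  have hb1' : I1 = Ideal.span {b1} := hb1
  have hpne : p ≠ 0 := hp.ne_zero
  -- layerwise data
  have hK : ∀ i, I0R R t I0 i = Ideal.span {chain R t i a0} := by
    intro i
    rw [I0R, ha0', Ideal.map_span, Set.image_singleton]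
  have hJ0 : ∀ i, I0R R t I0 (i + 1) = Ideal.span {t i (chain R t i a0)} := by
    intro i
    rw [I0R_succ, hK i, Ideal.map_span, Set.image_singleton]
  have hJ : ∀ i, I1R R t I1 i = Ideal.span {chain1 R t i b1} := by
    intro i
    rw [I1R, hb1', Ideal.map_span, Set.image_singleton]
  have hchain : ∀ i, I0R R t I0 (i + 1) = (I0R R t I0 1).map (chain1 R t i) := by
    intro i
    rw [I0R, I0R, Ideal.map_map, chain_split]
  have hJp : ∀ i, (I1R R t I1 i) ^ p = I0R R t I0 (i + 1) := by
    intro i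
    rw [I1R, ← Ideal.map_pow, hI1p]
    exact (hchain i).symm
  have hFk : ∀ i, RingHom.ker (F i) =
      (I1R R t I1 i).map (Ideal.Quotient.mk (I0R R t I0 (i + 1))) := by
    intro i
    rw [hker i, I1R, Ideal.map_map]
  have hmemK : ∀ i, chain R t i a0 ∈ I0R R t I0 i := by
    intro i
    rw [hK i]; exact Ideal.mem_span_singleton_self _
  have hmemJ0 : ∀ i, t i (chain R t i a0) ∈ I0R R t I0 (i + 1) := by
    intro i
    rw [hJ0 i]; exact Ideal.mem_span_singleton_self _
  constructor
  · intro h i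
    refine ⟨(h i).1, ?_⟩
    obtain ⟨_, Ftor, hbij, hcomp⟩ := h i
    exact Aux3.fwd hpne (hJ i) (hK i) (hJ0 i) (hJp i) (hd i) (hFk i)
      (fun x hx => (h i).1 _ (hmemK i) x hx)
      (fun x hx => (h (i + 1)).1 _ (hmemJ0 i) x hx)
      Ftor hbij hcomp
  · intro h i
    refine ⟨(h i).1, ?_⟩
    obtain ⟨_, g, hgbij, hgmul, hg0⟩ := h i
    exact Aux4.bwd hpne (hJ i) (hK i) (hJ0 i) (hJp i) (hd i) (hFk i)
      (fun x hx => (h i).1 _ (hmemK i) x hx)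
      (fun x hx => (h (i + 1)).1 _ (hmemJ0 i) x hx)
      g hgbij hgmul hg0
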